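/- arXiv:1001.1277 — 4 statements merged into one kernel-verified Lean document; each statement's English description precedes it below -/
import Mathlib

section
/- The polynomial $x^4y^2+y^4z^2+z^4x^2-3x^2y^2z^2$ is nonnegative on $\mathbb{R}^3$ but is not a sum of squares of polynomials in $\mathbb{R}[x,y,z]$. -/
/-!
If `f = ∑ pᵢ²`, take the largest monomial `E` occurring in the `pᵢ` for an additive linear order
refining a linear weight: the leading squares cannot cancel, so `E²` occurs in `f`. Hence every
`pᵢ` is supported in half the Newton polytope of `f`, whose lattice points are `x²y, y²z, z²x`
and the centroid `xyz`. The only way to write `x²y²z²` as a product of two of these is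
`xyz · xyz`, so its coefficient in `∑ pᵢ²` is a sum of squares, not `-3`.
Nonnegativity is AM-GM for `x⁴y², y⁴z², z⁴x²`, whose product is `(x²y²z²)³`.
-/

open MvPolynomial

theorem Real.three_mul_le_add_of_mul_eq_pow_three {a b c t : ℝ} (ha : 0 ≤ a) (hb : 0 ≤ b)
    (hc : 0 ≤ c) (h : a * b * c = t ^ 3) : 3 * t ≤ a + b + c := by
  rcases lt_or_ge t 0 with ht | ht
  · linarith
  have amgm := Real.geom_mean_le_arith_mean3_weighted (w₁ := 1 / 3) (w₂ := 1 / 3) (w₃ := 1 / 3)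
    (by norm_num) (by norm_num) (by norm_num) ha hb hc (by norm_num)
  rw [← Real.mul_rpow ha hb, ← Real.mul_rpow (mul_nonneg ha hb) hc, h, ← Real.rpow_natCast,
    ← Real.rpow_mul ht] at amgm
  norm_num at amgm
  linarith

namespace MvPolynomial

variable {σ R : Type*}

section CommSemiring

variable [CommSemiring R]

theorem coeff_add_self_sq {p : MvPolynomial σ R} {m : σ →₀ ℕ}
    (h : ∀ a ∈ p.support, ∀ b ∈ p.support, a + b = m + m → a = m) :
    coeff (m + m) (p ^ 2) = coeff m p ^ 2 := by
  classical
  rw [sq, sq, coeff_mul, Finset.sum_eq_single (m, m)]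
  · rintro ⟨a, b⟩ hab hne
    by_contra hab0
    have hsum : a + b = m + m := Finset.HasAntidiagonal.mem_antidiagonal.1 hab
    have ham : a = m := h a (mem_support_iff.2 (left_ne_zero_of_mul hab0)) b
      (mem_support_iff.2 (right_ne_zero_of_mul hab0)) hsum
    subst ham
    exact hne (Prod.ext rfl (add_left_cancel hsum))
  · intro hmm
    exact absurd (Finset.HasAntidiagonal.mem_antidiagonal.2 (rfl : m + m = m + m)) hmm

theorem coeff_add_self_sum_sq {ι : Type*} {s : Finset ι} {p : ι → MvPolynomial σ R}
    {m : σ →₀ ℕ}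
    (h : ∀ i ∈ s, ∀ a ∈ (p i).support, ∀ b ∈ (p i).support, a + b = m + m → a = m) :
    coeff (m + m) (∑ i ∈ s, p i ^ 2) = ∑ i ∈ s, coeff m (p i) ^ 2 := by
  rw [coeff_sum]
  exact Finset.sum_congr rfl fun i hi => coeff_add_self_sq (h i hi)

end CommSemiring

variable [CommRing R] [LinearOrder R] [IsStrictOrderedRing R]

theorem exists_mem_support_sum_sq_le {Γ : Type*} [AddCommMonoid Γ] [LinearOrder Γ]
    [IsOrderedCancelAddMonoid Γ] (φ : (σ →₀ ℕ) →+ Γ) (hφ : Function.Injective φ)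
    {ι : Type*} {s : Finset ι} {p : ι → MvPolynomial σ R} {i : ι} (hi : i ∈ s)
    {m : σ →₀ ℕ} (hm : m ∈ (p i).support) :
    ∃ n ∈ (∑ i ∈ s, p i ^ 2).support, φ (m + m) ≤ φ n := by
  classical
  set S := s.biUnion fun i => (p i).support
  have hmS : m ∈ S := Finset.mem_biUnion.2 ⟨i, hi, hm⟩
  obtain ⟨E, hES, hEmax⟩ := S.exists_max_image φ ⟨m, hmS⟩
  have hE : ∀ j ∈ s, ∀ a ∈ (p j).support, ∀ b ∈ (p j).support, a + b = E + E → a = E := by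
    intro j hj a ha b hb hab
    have haE := hEmax a (Finset.mem_biUnion.2 ⟨j, hj, ha⟩)
    have hbE := hEmax b (Finset.mem_biUnion.2 ⟨j, hj, hb⟩)
    refine hφ (haE.antisymm (not_lt.1 fun hlt => ?_))
    have := add_lt_add_of_lt_of_le hlt hbE
    rw [← map_add, ← map_add, hab] at this
    exact this.false
  obtain ⟨j, hj, hEj⟩ := Finset.mem_biUnion.1 hES
  refine ⟨E + E, ?_, ?_⟩
  · rw [mem_support_iff, coeff_add_self_sum_sq hE]
    have hEj : coeff E (p j) ≠ 0 := mem_support_iff.1 hEj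
    exact (Finset.sum_pos' (fun _ _ => sq_nonneg _) ⟨j, hj, by positivity⟩).ne'
  · rw [map_add, map_add]
    exact add_le_add (hEmax m hmS) (hEmax m hmS)

theorem two_mul_weight_le_of_mem_support_sum_sq [LinearOrder σ] (w : σ → ℤ) {c : ℤ}
    {ι : Type*} {s : Finset ι} {p : ι → MvPolynomial σ R}
    (hf : ∀ n ∈ (∑ i ∈ s, p i ^ 2).support, Finsupp.weight w n ≤ c) {i : ι} (hi : i ∈ s)
    {m : σ →₀ ℕ} (hm : m ∈ (p i).support) :
    2 * Finsupp.weight w m ≤ c := by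
  -- break ties of the weight lexicographically, to get an injective order-compatible map
  let φ : (σ →₀ ℕ) →+ ℤ ×ₗ Lex (σ →₀ ℕ) :=
    { toFun := fun n => toLex (Finsupp.weight w n, toLex n)
      map_zero' := by simp
      map_add' := fun a b => by simp [← toLex_add] }
  have hφ_apply (n : σ →₀ ℕ) : φ n = toLex (Finsupp.weight w n, toLex n) := rfl
  have hφinj : Function.Injective φ := fun a b hab => by
    simpa [hφ_apply] using congrArg (fun x => (ofLex x).2) hab
  obtain ⟨n, hn, hle⟩ := exists_mem_support_sum_sq_le φ hφinj hi hm
  have hweight := Prod.Lex.monotone_fst _ _ hle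
  simp only [hφ_apply, ofLex_toLex, map_add] at hweight
  linarith [hf n hn]

end MvPolynomial

theorem Finsupp.weight_fin_three (a b c : ℤ) (n : Fin 3 →₀ ℕ) :
    Finsupp.weight ![a, b, c] n = n 0 * a + n 1 * b + n 2 * c := by
  simp [Finsupp.weight_apply, Finsupp.sum_fintype, Fin.sum_univ_three]

/-- The lattice points of `d • conv {(2,1,0), (0,2,1), (1,0,2)}`. -/
def cyclicTriangle (d : ℕ) : Set (Fin 3 →₀ ℕ) :=
  {n | n 0 + n 1 + n 2 = 3 * d ∧ n 0 ≤ n 1 + d ∧ n 1 ≤ n 2 + d ∧ n 2 ≤ n 0 + d}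

theorem mem_cyclicTriangle_of_mem_support_sum_sq {R : Type*} [CommRing R] [LinearOrder R]
    [IsStrictOrderedRing R] {d : ℕ} {ι : Type*} {s : Finset ι} {p : ι → MvPolynomial (Fin 3) R}
    (hf : ↑(∑ i ∈ s, p i ^ 2).support ⊆ cyclicTriangle (2 * d)) {i : ι} (hi : i ∈ s)
    {m : Fin 3 →₀ ℕ} (hm : m ∈ (p i).support) :
    m ∈ cyclicTriangle d := by
  have key (a b c : ℤ) (k : ℤ)
      (h : ∀ n ∈ cyclicTriangle (2 * d), n 0 * a + n 1 * b + n 2 * c ≤ k) :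
      2 * (m 0 * a + m 1 * b + m 2 * c) ≤ k := by
    rw [← Finsupp.weight_fin_three]
    refine two_mul_weight_le_of_mem_support_sum_sq _ (fun n hn => ?_) hi hm
    rw [Finsupp.weight_fin_three]
    exact h n (hf hn)
  have hdeg := key 1 1 1 (6 * d) fun n ⟨h, _⟩ => by omega
  have hdeg' := key (-1) (-1) (-1) (-6 * d) fun n ⟨h, _⟩ => by omega
  have h01 := key 1 (-1) 0 (2 * d) fun n ⟨_, h, _⟩ => by omega
  have h12 := key 0 1 (-1) (2 * d) fun n ⟨_, _, h, _⟩ => by omega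
  have h20 := key (-1) 0 1 (2 * d) fun n ⟨_, _, _, h⟩ => by omega
  exact ⟨by omega, by omega, by omega, by omega⟩

noncomputable abbrev exponent3 (a b c : ℕ) : Fin 3 →₀ ℕ :=
  Finsupp.equivFunOnFinite.symm ![a, b, c]

theorem eq_of_mem_cyclicTriangle_of_add_eq {a b : Fin 3 →₀ ℕ} (ha : a ∈ cyclicTriangle 1)
    (hb : b ∈ cyclicTriangle 1) (hab : a + b = exponent3 2 2 2) : a = exponent3 1 1 1 := by
  have h0 : a 0 + b 0 = 2 := by simpa using DFunLike.congr_fun hab 0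
  have h1 : a 1 + b 1 = 2 := by simpa using DFunLike.congr_fun hab 1
  have h2 : a 2 + b 2 = 2 := by simpa using DFunLike.congr_fun hab 2
  obtain ⟨ha, ha01, ha12, ha20⟩ := ha
  obtain ⟨hb, hb01, hb12, hb20⟩ := hb
  ext j
  fin_cases j <;> simp <;> omega

theorem monomial_exponent3 (a b c : ℕ) (r : ℝ) :
    monomial (exponent3 a b c) r = C r * X 0 ^ a * X 1 ^ b * X 2 ^ c := by
  rw [monomial_eq, Finsupp.prod_fintype _ _ (by simp), Fin.prod_univ_three]
  simp [mul_assoc]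

noncomputable def cyclicMotzkin : MvPolynomial (Fin 3) ℝ :=
  X 0 ^ 4 * X 1 ^ 2 + X 1 ^ 4 * X 2 ^ 2 + X 2 ^ 4 * X 0 ^ 2 - 3 * X 0 ^ 2 * X 1 ^ 2 * X 2 ^ 2

theorem cyclicMotzkin_eq_sum_monomial : cyclicMotzkin =
    monomial (exponent3 4 2 0) 1 + monomial (exponent3 0 4 2) 1 + monomial (exponent3 2 0 4) 1
      - monomial (exponent3 2 2 2) 3 := by
  simp only [monomial_exponent3, cyclicMotzkin, map_one, map_ofNat]
  ring

theorem coeff_cyclicMotzkin_two_two_two : coeff (exponent3 2 2 2) cyclicMotzkin = -3 := by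
  rw [cyclicMotzkin_eq_sum_monomial]
  simp [coeff_monomial]

theorem support_cyclicMotzkin_subset : ↑cyclicMotzkin.support ⊆ cyclicTriangle 2 := by
  intro n hn
  have : n = exponent3 4 2 0 ∨ n = exponent3 0 4 2 ∨ n = exponent3 2 0 4 ∨
      n = exponent3 2 2 2 := by
    by_contra! hn'
    rw [Finset.mem_coe, MvPolynomial.mem_support_iff, cyclicMotzkin_eq_sum_monomial] at hn
    simp [coeff_monomial, hn'.1.symm, hn'.2.1.symm, hn'.2.2.1.symm, hn'.2.2.2.symm] at hn
  rcases this with rfl | rfl | rfl | rfl <;> simp [cyclicTriangle]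

theorem cyclicMotzkin_ne_sum_sq {ι : Type*} (s : Finset ι) (p : ι → MvPolynomial (Fin 3) ℝ) :
    cyclicMotzkin ≠ ∑ i ∈ s, p i ^ 2 := by
  intro hf
  have hsupp : ∀ i ∈ s, ∀ m ∈ (p i).support, m ∈ cyclicTriangle 1 := fun i hi m hm =>
    mem_cyclicTriangle_of_mem_support_sum_sq (hf ▸ support_cyclicMotzkin_subset) hi hm
  have htwo : exponent3 1 1 1 + exponent3 1 1 1 = exponent3 2 2 2 := by
    ext j; fin_cases j <;> rfl
  have hcoeff : coeff (exponent3 1 1 1 + exponent3 1 1 1) (∑ i ∈ s, p i ^ 2) =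
      ∑ i ∈ s, coeff (exponent3 1 1 1) (p i) ^ 2 :=
    coeff_add_self_sum_sq fun i hi a ha b hb hab =>
      eq_of_mem_cyclicTriangle_of_add_eq (hsupp i hi a ha) (hsupp i hi b hb) (hab.trans htwo)
  rw [htwo, ← hf, coeff_cyclicMotzkin_two_two_two] at hcoeff
  linarith [Finset.sum_nonneg fun i (_ : i ∈ s) => sq_nonneg (coeff (exponent3 1 1 1) (p i))]

theorem cyclicMotzkin_eval_nonneg (v : Fin 3 → ℝ) : 0 ≤ eval v cyclicMotzkin := by
  have amgm := Real.three_mul_le_add_of_mul_eq_pow_three (a := v 0 ^ 4 * v 1 ^ 2)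
    (b := v 1 ^ 4 * v 2 ^ 2) (c := v 2 ^ 4 * v 0 ^ 2) (t := v 0 ^ 2 * v 1 ^ 2 * v 2 ^ 2)
    (by positivity) (by positivity) (by positivity) (by ring)
  simp only [cyclicMotzkin, map_add, map_sub, map_mul, map_pow, eval_X, map_ofNat]
  linarith

theorem stmt_4 :
    let x : MvPolynomial (Fin 3) ℝ := X 0
    let y : MvPolynomial (Fin 3) ℝ := X 1
    let z : MvPolynomial (Fin 3) ℝ := X 2
    let f := x^4*y^2 + y^4*z^2 + z^4*x^2 - 3*x^2*y^2*z^2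
    (∀ v : Fin 3 → ℝ, 0 ≤ eval v f) ∧
      ¬ ∃ (k : ℕ) (p : Fin k → MvPolynomial (Fin 3) ℝ), f = ∑ i, (p i) ^ 2 :=
  ⟨cyclicMotzkin_eval_nonneg, fun ⟨_, p, hf⟩ => cyclicMotzkin_ne_sum_sq _ p hf⟩
end

section
/- For every $\lambda\ge 0$ and every $(x,y,z)\in\mathbb{R}^3$, the symmetric matrix $M_\lambda(x,y,z)=\begin{pmatrix} x^2+(\lambda+1)z^2 & -xy & -xz\\ -xy & y^2+(\lambda+1)x^2 & -yz\\ -xz & -yz & z^2+(\lambda+1)y^2\end{pmatrix}$ is positive semi-definite. -/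
/-!
Since `M_λ = M_0 + λ • diagonal ![z², x², y²]`, it suffices to treat `λ = 0`, where
`v ↦ vᵀ M_0 v` is Choi's biquadratic form: nonnegative, but not a sum of squares. Two
Schur-complement steps (eliminating `v 0`, then `v 1`) show that its product with
`(x² + z²) (x⁴ + x²z² + y²z²)` is a sum of squares, and this multiplier is positive as soon as
`x ≠ 0`; for `x = 0` the form itself is a sum of squares.
-/

open Matrix

lemma choi_biquadratic_nonneg (x y z a b c : ℝ) :
    0 ≤ (x^2 + z^2) * a^2 + (x^2 + y^2) * b^2 + (y^2 + z^2) * c^2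
      - 2 * (x*y) * (a*b) - 2 * (x*z) * (a*c) - 2 * (y*z) * (b*c) := by
  rcases eq_or_ne x 0 with rfl | hx
  · nlinarith [sq_nonneg (z*a), sq_nonneg (y*b - z*c), sq_nonneg (y*c)]
  set A := x^4 + x^2*z^2 + y^2*z^2
  set B := y*z*(2*x^2 + z^2)
  have hmul_pos : 0 < A * (x^2 + z^2) := by positivity
  refine nonneg_of_mul_nonneg_right ?_ hmul_pos
  have hsos : A * (x^2 + z^2) * ((x^2 + z^2) * a^2 + (x^2 + y^2) * b^2 + (y^2 + z^2) * c^2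
      - 2 * (x*y) * (a*b) - 2 * (x*z) * (a*c) - 2 * (y*z) * (b*c))
      = A * ((x^2 + z^2) * a - x*y*b - x*z*c)^2 + (A*b - B*c)^2
        + ((x^3*y - x*y*z^2)^2 + (x*y^2*z - x*z^3)^2 + (x^2*z^2 - y^2*z^2)^2) * c^2 := by
    ring
  rw [hsos]
  positivity

def choiMatrix (x y z : ℝ) : Matrix (Fin 3) (Fin 3) ℝ :=
  !![x^2 + z^2, -(x*y), -(x*z);
     -(x*y), y^2 + x^2, -(y*z);
     -(x*z), -(y*z), z^2 + y^2]

lemma posSemidef_choiMatrix (x y z : ℝ) : (choiMatrix x y z).PosSemidef := by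
  refine .of_dotProduct_mulVec_nonneg ?_ fun v => ?_
  · ext i j
    fin_cases i <;> fin_cases j <;> simp [choiMatrix]
  · refine (choi_biquadratic_nonneg x y z (v 0) (v 1) (v 2)).trans_eq ?_
    simp [choiMatrix, dotProduct, mulVec, Fin.sum_univ_three]
    ring

theorem stmt_5 (lam : ℝ) (hlam : 0 ≤ lam) (x y z : ℝ) :
    (!![x^2 + (lam+1)*z^2, -(x*y), -(x*z);
        -(x*y), y^2 + (lam+1)*x^2, -(y*z);
        -(x*z), -(y*z), z^2 + (lam+1)*y^2] : Matrix (Fin 3) (Fin 3) ℝ).PosSemidef := by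
  have hsplit : (!![x^2 + (lam+1)*z^2, -(x*y), -(x*z);
        -(x*y), y^2 + (lam+1)*x^2, -(y*z);
        -(x*z), -(y*z), z^2 + (lam+1)*y^2] : Matrix (Fin 3) (Fin 3) ℝ)
      = choiMatrix x y z + lam • diagonal ![z^2, x^2, y^2] := by
    ext i j
    fin_cases i <;> fin_cases j <;> simp [choiMatrix] <;> ring
  have hdiag : (diagonal ![z^2, x^2, y^2]).PosSemidef :=
    posSemidef_diagonal_iff.mpr fun i => by fin_cases i <;> simp [sq_nonneg]
  rw [hsplit]
  exact (posSemidef_choiMatrix x y z).add (hdiag.smul hlam)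
end

section
/- For every real $\lambda$, the biquadratic form $f_\lambda(x,y,z;S,T,U)=(x^2+(\lambda+1)z^2)S^2-2xyST-2xzSU+(y^2+(\lambda+1)x^2)T^2-2yzTU+(z^2+(\lambda+1)y^2)U^2$ is not a sum of squares of bilinear forms in $\mathbb{R}[x,y,z,S,T,U]$. -/
/-!
Write a sum of squares of bilinear forms as `F u v = ∑ᵢ (uᵀ Cᵢ v)²`. Then `F eₚ e_q = ∑ᵢ (Cᵢ)ₚ_q²`,
so the monomials `y²S²`, `x²U²`, `z²T²` missing from `f_λ` force `(Cᵢ)₁₀ = (Cᵢ)₀₂ = (Cᵢ)₂₁ = 0`.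
Averaging `(sᵀ C s)²` over sign vectors `s ∈ {±1}³` leaves `tr(C)² + ∑_{p≠q} C_pq² + 2 ∑_{p<q} C_pq C_qp`,
whose mixed products vanish for the `Cᵢ`. Summed over `i`, this reads `3λ = ∑ᵢ tr(Cᵢ)² + 3(λ + 1)`:
`f_λ(s, s) = 3λ` for every sign vector, and the off-diagonal squares add up to the coefficients
`λ + 1` of `x²T²`, `y²U²`, `z²S²`. Hence `∑ᵢ tr(Cᵢ)² = -3`, which is absurd.
-/

open MvPolynomial Matrix Finset

theorem eval_sum_sq_bilinear {R ι m n : Type*} [CommRing R] [Fintype ι] [Fintype m] [Fintype n]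
    (c : ι → Matrix m n R) (u : m → R) (v : n → R) :
    eval (Sum.elim u v) (∑ i, (∑ p, ∑ q, C (c i p q) * X (Sum.inl p) * X (Sum.inr q)) ^ 2) =
      ∑ i, (u ⬝ᵥ c i *ᵥ v) ^ 2 := by
  simp only [map_sum, map_pow, map_mul, eval_C, eval_X, Sum.elim_inl, Sum.elim_inr, dotProduct,
    mulVec, mul_sum]
  refine sum_congr rfl fun i _ => congrArg (· ^ 2) ?_
  exact sum_congr rfl fun p _ => sum_congr rfl fun q _ => by ring

theorem sum_sign_sq_dotProduct_mulVec {R : Type*} [CommRing R] (M : Matrix (Fin 3) (Fin 3) R) :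
    (![1, 1, 1] ⬝ᵥ M *ᵥ ![1, 1, 1]) ^ 2 + (![1, 1, -1] ⬝ᵥ M *ᵥ ![1, 1, -1]) ^ 2
      + (![1, -1, 1] ⬝ᵥ M *ᵥ ![1, -1, 1]) ^ 2 + (![-1, 1, 1] ⬝ᵥ M *ᵥ ![-1, 1, 1]) ^ 2
    = 4 * (M.trace ^ 2 + (M 0 1 ^ 2 + M 0 2 ^ 2 + M 1 0 ^ 2 + M 1 2 ^ 2 + M 2 0 ^ 2 + M 2 1 ^ 2)
      + 2 * (M 0 1 * M 1 0 + M 0 2 * M 2 0 + M 1 2 * M 2 1)) := by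
  simp only [dotProduct, mulVec, trace, Matrix.diag, Fin.sum_univ_three, cons_val_zero, cons_val_one,
    Matrix.cons_val]
  ring

section SumOfSquares

variable {R ι n : Type*} [CommRing R] [Fintype ι] [Fintype n] [DecidableEq n]
  {F : (n → R) → (n → R) → R} {c : ι → Matrix n n R}

theorem sum_sq_entry_eq_apply_single (h : ∀ u v, F u v = ∑ i, (u ⬝ᵥ c i *ᵥ v) ^ 2) (p q : n) :
    ∑ i, c i p q ^ 2 = F (Pi.single p 1) (Pi.single q 1) := by
  simp [h]

theorem entry_eq_zero_of_apply_single_eq_zero [LinearOrder R] [IsStrictOrderedRing R]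
    (h : ∀ u v, F u v = ∑ i, (u ⬝ᵥ c i *ᵥ v) ^ 2)
    {p q : n} (hpq : F (Pi.single p 1) (Pi.single q 1) = 0) (i : ι) : c i p q = 0 := by
  rw [← sum_sq_entry_eq_apply_single h] at hpq
  simp only [sq] at hpq
  exact (sum_mul_self_eq_zero_iff _ _).mp hpq i (mem_univ i)

end SumOfSquares

def choiForm (lam : ℝ) (u v : Fin 3 → ℝ) : ℝ :=
  (u 0 ^ 2 + (lam + 1) * u 2 ^ 2) * v 0 ^ 2 - 2 * u 0 * u 1 * v 0 * v 1 - 2 * u 0 * u 2 * v 0 * v 2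
    + (u 1 ^ 2 + (lam + 1) * u 0 ^ 2) * v 1 ^ 2 - 2 * u 1 * u 2 * v 1 * v 2
    + (u 2 ^ 2 + (lam + 1) * u 1 ^ 2) * v 2 ^ 2

theorem choiForm_ne_sum_sq (lam : ℝ) {ι : Type*} [Fintype ι] (c : ι → Matrix (Fin 3) (Fin 3) ℝ) :
    ¬ ∀ u v, choiForm lam u v = ∑ i, (u ⬝ᵥ c i *ᵥ v) ^ 2 := by
  intro h
  have h10 := entry_eq_zero_of_apply_single_eq_zero h (p := 1) (q := 0) (by simp [choiForm])
  have h02 := entry_eq_zero_of_apply_single_eq_zero h (p := 0) (q := 2) (by simp [choiForm])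
  have h21 := entry_eq_zero_of_apply_single_eq_zero h (p := 2) (q := 1) (by simp [choiForm])
  have hsum := sum_congr rfl fun i (_ : i ∈ univ) => sum_sign_sq_dotProduct_mulVec (c i)
  simp only [h10, h02, h21, mul_zero, zero_mul, add_zero, zero_pow two_ne_zero] at hsum
  simp only [sum_add_distrib, ← mul_sum, ← h, sum_sq_entry_eq_apply_single h] at hsum
  simp [choiForm] at hsum
  have htrace : 0 ≤ ∑ i, (c i).trace ^ 2 := sum_nonneg fun i _ => sq_nonneg _
  linarith

theorem stmt_7 (lam : ℝ) :
    let x : MvPolynomial (Fin 3 ⊕ Fin 3) ℝ := X (Sum.inl 0)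
    let y : MvPolynomial (Fin 3 ⊕ Fin 3) ℝ := X (Sum.inl 1)
    let z : MvPolynomial (Fin 3 ⊕ Fin 3) ℝ := X (Sum.inl 2)
    let S : MvPolynomial (Fin 3 ⊕ Fin 3) ℝ := X (Sum.inr 0)
    let T : MvPolynomial (Fin 3 ⊕ Fin 3) ℝ := X (Sum.inr 1)
    let U : MvPolynomial (Fin 3 ⊕ Fin 3) ℝ := X (Sum.inr 2)
    let f := (x^2 + C (lam+1) * z^2) * S^2 - 2*x*y*S*T - 2*x*z*S*U
        + (y^2 + C (lam+1) * x^2) * T^2 - 2*y*z*T*U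
        + (z^2 + C (lam+1) * y^2) * U^2
    ¬ ∃ (k : ℕ) (c : Fin k → Fin 3 → Fin 3 → ℝ),
        f = ∑ i, (∑ p : Fin 3, ∑ q : Fin 3,
              C (c i p q) * X (Sum.inl p) * X (Sum.inr q)) ^ 2 := by
  intro x y z S T U f ⟨k, c, hf⟩
  refine choiForm_ne_sum_sq lam (fun i => of (c i)) fun u v => ?_
  rw [← eval_sum_sq_bilinear]
  simp only [of_apply, ← hf]
  simp [f, x, y, z, S, T, U, choiForm]
end

section
/- There do not exist finitely many pairs of polynomials $a_i,b_i\in\mathbb{R}[x,y]$ such that simultaneously $\sum_i a_i^2=1+x^2$, $\sum_i b_i^2=x^2+y^4$, and $\sum_i a_ib_i=xy$. -/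
/-!
Over an ordered ring, if `∑ aᵢ² = q` and `M` is the largest monomial occurring in the `aᵢ` for
some monomial order, then the coefficient of `2M` in `q` is `∑ (coeff M aᵢ)² > 0`; so no monomial
of an `aᵢ` exceeds half the leading monomial of `q`, and dually for the smallest one. Lex with
`y > x` confines the `aᵢ` to `span(1, x)`; lex with `x > y` removes `xy` from the `bᵢ`, and the
smallest monomial in degree-lex removes `y`. Hence the `xy`-coefficient of `∑ aᵢ bᵢ` is `0`.
-/

open MvPolynomial

section SumOfSquares

variable {σ ι R Γ : Type*} [AddCommMonoid Γ] [LinearOrder Γ] [IsOrderedCancelAddMonoid Γ]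
  {φ : (σ →₀ ℕ) → Γ}

theorem coeff_add_self_sq_of_forall_le [CommSemiring R] (hadd : ∀ m n, φ (m + n) = φ m + φ n)
    (hinj : φ.Injective) {p : MvPolynomial σ R} {M : σ →₀ ℕ}
    (hM : ∀ m ∈ p.support, φ m ≤ φ M) :
    coeff (M + M) (p ^ 2) = coeff M p ^ 2 := by
  classical
  rw [sq, coeff_mul, Finset.sum_eq_single (M, M) _ (by simp), sq]
  rintro ⟨m, n⟩ hmn hne
  rw [Finset.HasAntidiagonal.mem_antidiagonal] at hmn
  by_contra hc
  have hm := hM m (mem_support_iff.2 (left_ne_zero_of_mul hc))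
  have hn := hM n (mem_support_iff.2 (right_ne_zero_of_mul hc))
  have := (add_eq_add_iff_eq_and_eq hm hn).1 (by rw [← hadd, ← hadd, hmn])
  exact hne (by rw [hinj this.1, hinj this.2])

variable [Fintype ι] [CommRing R] [LinearOrder R] [IsStrictOrderedRing R]

theorem exists_coeff_ne_zero_le_of_sum_sq (hadd : ∀ m n, φ (m + n) = φ m + φ n)
    (hinj : φ.Injective) {a : ι → MvPolynomial σ R} {q : MvPolynomial σ R}
    (h : ∑ i, a i ^ 2 = q) {i : ι} {m : σ →₀ ℕ} (hm : coeff m (a i) ≠ 0) :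
    ∃ t, coeff t q ≠ 0 ∧ φ (m + m) ≤ φ t := by
  classical
  let S := Finset.univ.biUnion fun j => (a j).support
  have hmem : ∀ {j n}, coeff n (a j) ≠ 0 → n ∈ S := fun hn =>
    Finset.mem_biUnion.2 ⟨_, Finset.mem_univ _, mem_support_iff.2 hn⟩
  obtain ⟨M, hMS, hMmax⟩ := S.exists_max_image φ ⟨m, hmem hm⟩
  obtain ⟨j, -, hj⟩ := Finset.mem_biUnion.1 hMS
  have hmM := hMmax m (hmem hm)
  refine ⟨M + M, ?_, by rw [hadd, hadd]; exact add_le_add hmM hmM⟩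
  rw [← h, coeff_sum]
  simp only [coeff_add_self_sq_of_forall_le hadd hinj fun n hn =>
    hMmax n (hmem (mem_support_iff.1 hn))]
  exact (Finset.sum_pos' (fun k _ => sq_nonneg (coeff M (a k)))
    ⟨j, Finset.mem_univ _, pow_two_pos_of_ne_zero (mem_support_iff.1 hj)⟩).ne'

theorem exists_coeff_ne_zero_ge_of_sum_sq (hadd : ∀ m n, φ (m + n) = φ m + φ n)
    (hinj : φ.Injective) {a : ι → MvPolynomial σ R} {q : MvPolynomial σ R}
    (h : ∑ i, a i ^ 2 = q) {i : ι} {m : σ →₀ ℕ} (hm : coeff m (a i) ≠ 0) :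
    ∃ t, coeff t q ≠ 0 ∧ φ t ≤ φ (m + m) :=
  exists_coeff_ne_zero_le_of_sum_sq (φ := OrderDual.toDual ∘ φ) hadd
    (OrderDual.toDual.injective.comp hinj) h hm

end SumOfSquares

section TwoVariables

variable {ι R : Type*} [Fintype ι] [CommRing R] [LinearOrder R] [IsStrictOrderedRing R]

theorem coeff_eq_zero_of_sum_sq_eq_one_add_X_sq {a : ι → MvPolynomial (Fin 2) R}
    (h : ∑ i, a i ^ 2 = 1 + X 0 ^ 2) (i : ι) {m : Fin 2 →₀ ℕ}
    (hm : m 1 ≠ 0 ∨ 1 < m 0) : coeff m (a i) = 0 := by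
  by_contra hne
  obtain ⟨t, ht, hle⟩ := exists_coeff_ne_zero_le_of_sum_sq
    (φ := fun m : Fin 2 →₀ ℕ => toLex (m 1, m 0)) (fun _ _ => rfl)
    (fun m n h => Finsupp.ext (Fin.forall_fin_two.2 (by simpa [and_comm] using h))) h hne
  have ht' : t = 0 ∨ t = Finsupp.single 0 2 := by
    contrapose! ht
    simp [coeff_one, coeff_X_pow, ht.1.symm, ht.2.symm]
  rcases ht' with rfl | rfl <;> simp [Prod.Lex.le_iff] at hle <;> omega

theorem coeff_eq_zero_of_sum_sq_eq_X_sq_add_X_pow_four {b : ι → MvPolynomial (Fin 2) R}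
    (h : ∑ i, b i ^ 2 = X 0 ^ 2 + X 1 ^ 4) (i : ι) {m : Fin 2 →₀ ℕ} (hm₁ : m 1 = 1)
    (hm₀ : m 0 ≤ 1) : coeff m (b i) = 0 := by
  by_contra hne
  have hq : ∀ t, coeff t (X 0 ^ 2 + X 1 ^ 4 : MvPolynomial (Fin 2) R) ≠ 0 →
      t = Finsupp.single 0 2 ∨ t = Finsupp.single 1 4 := by
    intro t ht
    contrapose! ht
    simp [coeff_X_pow, ht.1.symm, ht.2.symm]
  obtain ⟨t, ht, hle⟩ := exists_coeff_ne_zero_le_of_sum_sq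
    (φ := fun m : Fin 2 →₀ ℕ => toLex (m 0, m 1)) (fun _ _ => rfl)
    (fun m n h => Finsupp.ext (Fin.forall_fin_two.2 (by simpa using h))) h hne
  obtain ⟨u, hu, hge⟩ := exists_coeff_ne_zero_ge_of_sum_sq
    (φ := fun m : Fin 2 →₀ ℕ => toLex (m 0 + m 1, m 0))
    (fun m n => congrArg toLex (Prod.ext (add_add_add_comm _ _ _ _) rfl))
    (fun m n h => Finsupp.ext (Fin.forall_fin_two.2 (by simp at h; omega))) h hne
  rcases hq t ht with rfl | rfl <;> rcases hq u hu with rfl | rfl <;>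
    simp [Prod.Lex.le_iff] at hle hge <;> omega

end TwoVariables

theorem stmt_10 :
    ¬ ∃ (k : ℕ) (a b : Fin k → MvPolynomial (Fin 2) ℝ),
        (∑ i, (a i) ^ 2 = 1 + (X 0 : MvPolynomial (Fin 2) ℝ) ^ 2) ∧
        (∑ i, (b i) ^ 2 = (X 0 : MvPolynomial (Fin 2) ℝ) ^ 2 + (X 1) ^ 4) ∧
        (∑ i, a i * b i = (X 0 : MvPolynomial (Fin 2) ℝ) * X 1) := by
  rintro ⟨k, a, b, ha, hb, hab⟩
  have hxy : coeff (Finsupp.single 0 1 + Finsupp.single 1 1) (∑ i, a i * b i) = 0 := by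
    rw [coeff_sum]
    refine Finset.sum_eq_zero fun i _ => ?_
    rw [coeff_mul]
    refine Finset.sum_eq_zero ?_
    rintro ⟨m, n⟩ hmn
    dsimp only
    have h₀ := congrArg (· 0) (Finset.HasAntidiagonal.mem_antidiagonal.1 hmn)
    have h₁ := congrArg (· 1) (Finset.HasAntidiagonal.mem_antidiagonal.1 hmn)
    simp only [Finsupp.add_apply, Finsupp.single_eq_same,
      Finsupp.single_eq_of_ne zero_ne_one, Finsupp.single_eq_of_ne one_ne_zero] at h₀ h₁
    by_cases hm : m 1 = 0 ∧ m 0 ≤ 1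
    · rw [coeff_eq_zero_of_sum_sq_eq_X_sq_add_X_pow_four hb i (by omega) (by omega), mul_zero]
    · rw [coeff_eq_zero_of_sum_sq_eq_one_add_X_sq ha i (by omega), zero_mul]
  rw [hab, X, X, monomial_mul, coeff_monomial, if_pos rfl] at hxy
  simp at hxy
end
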